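/- arXiv:0911.3739 — 2 statements merged into one kernel-verified Lean document; each statement's English description precedes it below -/
import Mathlib

section
/- Let B be a Banach space and (f_a)_{a∈A} a family of pairwise commuting continuous maps from B to B, each nonexpansive (1-Lipschitz), and suppose all of them map a nonempty compact convex subset C ⊆ B into itself. Then there exists a point x ∈ C which is a common fixed point of all the f_a. -/
/-!
Zorn's lemma gives a minimal nonempty compact convex invariant set `K` and, inside it, a minimal
nonempty compact invariant set `W`. Commutativity makes each `f a '' W` invariant, so minimality
forces `f a '' W = W`. If `W` had two points, the average `u` of a finite `d/2`-net of `W`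
(`d = diam W`) would lie within some `r < d` of every point of `W` (DeMarr), and the points of `K`
within `r` of all of `W` would form a smaller compact convex set containing `u`, invariant
because each `f a` is nonexpansive and maps `W` onto itself. Hence `W` is a common fixed point.
-/

open Set Metric Finset

theorem IsChain.sInter_nonempty_of_isCompact {X : Type*} [TopologicalSpace X] [T2Space X]
    {c : Set (Set X)} (hc : IsChain (· ⊆ ·) c) (hne : c.Nonempty)
    (hn : ∀ s ∈ c, s.Nonempty) (hK : ∀ s ∈ c, IsCompact s) : (⋂₀ c).Nonempty :=
  have : Nonempty c := hne.to_subtype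
  IsCompact.nonempty_sInter_of_directed_nonempty_isCompact_isClosed
    (IsChain.directedOn (r := fun s t : Set X ↦ s ⊇ t) hc.symm) hn hK
    fun s hs ↦ (hK s hs).isClosed

theorem exists_minimal_isCompact_mapsTo {X A : Type*} [TopologicalSpace X] [T2Space X]
    (f : A → X → X) {P : Set X → Prop} (hP : ∀ c : Set (Set X), (∀ s ∈ c, P s) → P (⋂₀ c))
    {K : Set X} (hK : P K ∧ K.Nonempty ∧ IsCompact K ∧ ∀ a, MapsTo (f a) K K) :
    ∃ M ⊆ K, Minimal (fun M ↦ P M ∧ M.Nonempty ∧ IsCompact M ∧ ∀ a, MapsTo (f a) M M) M := by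
  refine zorn_superset_nonempty _ (fun c hcS hc hne ↦ ?_) K hK
  obtain ⟨s₀, hs₀⟩ := hne
  refine ⟨⋂₀ c, ⟨hP c fun s hs ↦ (hcS hs).1, ?_, ?_, fun a x hx ↦ ?_⟩,
    fun s hs ↦ sInter_subset_of_mem hs⟩
  · exact hc.sInter_nonempty_of_isCompact ⟨s₀, hs₀⟩ (fun s hs ↦ (hcS hs).2.1)
      fun s hs ↦ (hcS hs).2.2.1
  · exact (hcS hs₀).2.2.1.of_isClosed_subset
      (isClosed_sInter fun s hs ↦ (hcS hs).2.2.1.isClosed) (sInter_subset_of_mem hs₀)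
  · exact mem_sInter.2 fun s hs ↦ (hcS hs).2.2.2 a (mem_sInter.1 hx s hs)

theorem image_eq_of_minimal_isCompact_mapsTo {X A : Type*} [TopologicalSpace X]
    {f : A → X → X} (hcont : ∀ a, Continuous (f a)) (hcomm : ∀ a b, f a ∘ f b = f b ∘ f a)
    {W : Set X} (hW : Minimal (fun M ↦ M.Nonempty ∧ IsCompact M ∧ ∀ a, MapsTo (f a) M M) W)
    (a : A) : f a '' W = W := by
  obtain ⟨hne, hcomp, hinv⟩ := hW.prop
  have hsub : f a '' W ⊆ W := (hinv a).image_subset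
  refine hsub.antisymm (hW.2 ⟨hne.image _, hcomp.image (hcont a), ?_⟩ hsub)
  rintro b _ ⟨x, hx, rfl⟩
  exact ⟨f b x, hinv b hx, congrFun (hcomm a b) x⟩

theorem LipschitzWith.mapsTo_biInter_closedBall {X : Type*} [PseudoMetricSpace X] {f : X → X}
    (hf : LipschitzWith 1 f) {W : Set X} (hW : W ⊆ f '' W) (r : ℝ) :
    MapsTo f (⋂ w ∈ W, closedBall w r) (⋂ w ∈ W, closedBall w r) := by
  intro x hx
  simp only [mem_iInter₂, mem_closedBall] at hx ⊢
  intro w hw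
  obtain ⟨y, hy, rfl⟩ := hW hw
  calc dist (f x) (f y) ≤ dist x y := by simpa using hf.dist_le_mul x y
    _ ≤ r := hx y hy

theorem dist_average_le {E : Type*} [NormedAddCommGroup E] [NormedSpace ℝ E] {T : Finset E}
    {w x₀ : E} {ε d : ℝ} (hx₀ : x₀ ∈ T) (h₀ : dist x₀ w ≤ ε) (hd : ∀ x ∈ T, dist x w ≤ d) :
    dist (∑ x ∈ T, (#T : ℝ)⁻¹ • x) w ≤ (ε + (#T - 1) * d) / #T := by
  classical
  have hT : (0 : ℝ) < #T := by exact_mod_cast card_pos.2 ⟨x₀, hx₀⟩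
  have hsum : ∑ x ∈ T, dist x w ≤ ε + (#T - 1) * d := by
    rw [← add_sum_erase T _ hx₀]
    refine add_le_add h₀ ((sum_le_sum fun x hx ↦ hd x (mem_of_mem_erase hx)).trans_eq ?_)
    rw [sum_const, card_erase_of_mem hx₀, nsmul_eq_mul, Nat.cast_pred (card_pos.2 ⟨x₀, hx₀⟩)]
  calc dist (∑ x ∈ T, (#T : ℝ)⁻¹ • x) w ≤ ∑ x ∈ T, (#T : ℝ)⁻¹ • dist x w :=
        (convexOn_dist w convex_univ).map_sum_le (fun _ _ ↦ by positivity)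
          (by simp [hT.ne']) fun _ _ ↦ mem_univ _
    _ = (∑ x ∈ T, dist x w) / #T := by rw [← smul_sum, smul_eq_mul, inv_mul_eq_div]
    _ ≤ (ε + (#T - 1) * d) / #T := by gcongr

theorem TotallyBounded.exists_dist_le_lt_diam {E : Type*} [NormedAddCommGroup E]
    [NormedSpace ℝ E] {W : Set E} (hW : TotallyBounded W) (hnt : W.Nontrivial) :
    ∃ u ∈ convexHull ℝ W, ∃ r < diam W, ∀ w ∈ W, dist u w ≤ r := by
  set d := diam W
  have hd : 0 < d := diam_pos hnt hW.isBounded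
  obtain ⟨t, htW, htfin, hcover⟩ := finite_approx_of_totallyBounded hW (d / 2) (by positivity)
  set T := htfin.toFinset
  have hTW : ∀ x ∈ T, x ∈ W := fun x hx ↦ htW (htfin.mem_toFinset.1 hx)
  obtain ⟨x₀, hx₀⟩ : T.Nonempty := by
    obtain ⟨w, hw⟩ := hnt.nonempty
    obtain ⟨x, hx, -⟩ := mem_iUnion₂.1 (hcover hw)
    exact ⟨x, htfin.mem_toFinset.2 hx⟩
  have hT : (0 : ℝ) < #T := by exact_mod_cast card_pos.2 ⟨x₀, hx₀⟩
  refine ⟨∑ x ∈ T, (#T : ℝ)⁻¹ • x, (convex_convexHull ℝ W).sum_mem (fun _ _ ↦ by positivity)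
    (by simp [hT.ne']) fun x hx ↦ subset_convexHull ℝ W (hTW x hx),
    (d / 2 + (#T - 1) * d) / #T, by rw [div_lt_iff₀ hT]; linarith, fun w hw ↦ ?_⟩
  obtain ⟨x, hx, hxw⟩ := mem_iUnion₂.1 (hcover hw)
  exact dist_average_le (htfin.mem_toFinset.2 hx) (dist_comm x w ▸ hxw.le)
    fun y hy ↦ dist_le_diam_of_mem hW.isBounded (hTW y hy) hw

theorem common_fixed_point_of_commuting_nonexpansive_general
    {B : Type*} [NormedAddCommGroup B] [NormedSpace ℝ B]
    {A : Type*} (f : A → B → B)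
    (hnonexp : ∀ a x y, ‖f a x - f a y‖ ≤ ‖x - y‖)
    (hcomm : ∀ a b, f a ∘ f b = f b ∘ f a)
    (C : Set B) (hCne : C.Nonempty) (hCcomp : IsCompact C) (hCconv : Convex ℝ C)
    (hmaps : ∀ a, Set.MapsTo (f a) C C) :
    ∃ x ∈ C, ∀ a, f a x = x := by
  have hlip : ∀ a, LipschitzWith 1 (f a) := fun a ↦
    .of_dist_le_mul fun x y ↦ by simpa [dist_eq_norm] using hnonexp a x y
  obtain ⟨K, hKC, hK⟩ := exists_minimal_isCompact_mapsTo f (fun _ ↦ convex_sInter)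
    ⟨hCconv, hCne, hCcomp, hmaps⟩
  obtain ⟨hKconv, hKne, hKcomp, hKinv⟩ := hK.prop
  obtain ⟨W, hWK, hW⟩ := exists_minimal_isCompact_mapsTo f (P := fun _ ↦ True)
    (fun _ _ ↦ trivial) ⟨trivial, hKne, hKcomp, hKinv⟩
  replace hW := hW.mono (fun _ h ↦ ⟨trivial, h⟩) hW.prop.2
  obtain ⟨hWne, hWcomp, hWinv⟩ := hW.prop
  have hsurj := image_eq_of_minimal_isCompact_mapsTo (fun a ↦ (hlip a).continuous) hcomm hW
  obtain ⟨w₀, hw₀⟩ := hWne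
  refine ⟨w₀, hKC (hWK hw₀), fun a ↦ ?_⟩
  suffices W.Subsingleton from this (hWinv a hw₀) hw₀
  by_contra hnt
  obtain ⟨u, hu, r, hr, hur⟩ :=
    hWcomp.totallyBounded.exists_dist_le_lt_diam (not_subsingleton_iff.1 hnt)
  have hKr : K ⊆ K ∩ ⋂ w ∈ W, closedBall w r := hK.2 ⟨hKconv.inter (convex_iInter₂ fun w _ ↦
      convex_closedBall w r), ⟨u, convexHull_min hWK hKconv hu, by simpa using hur⟩,
      hKcomp.inter_right (isClosed_biInter fun w _ ↦ isClosed_closedBall),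
      fun a ↦ (hKinv a).inter_inter ((hlip a).mapsTo_biInter_closedBall (hsurj a).superset r)⟩
    inter_subset_left
  refine hr.not_ge (diam_le_of_forall_dist_le (dist_nonneg.trans (hur w₀ hw₀)) ?_)
  intro x hx y hy
  exact mem_iInter₂.1 (hKr (hWK hx)).2 y hy

/-- DeMarr's theorem: a family of pairwise commuting nonexpansive continuous self-maps
of a Banach space preserving a nonempty compact convex set has a common fixed point. -/
theorem common_fixed_point_of_commuting_nonexpansive
    {B : Type*} [NormedAddCommGroup B] [NormedSpace ℝ B] [CompleteSpace B]
    {A : Type*} (f : A → B → B)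
    (hcont : ∀ a, Continuous (f a))
    (hnonexp : ∀ a x y, ‖f a x - f a y‖ ≤ ‖x - y‖)
    (hcomm : ∀ a b, f a ∘ f b = f b ∘ f a)
    (C : Set B) (hCne : C.Nonempty) (hCcomp : IsCompact C) (hCconv : Convex ℝ C)
    (hmaps : ∀ a, Set.MapsTo (f a) C C) :
    ∃ x ∈ C, ∀ a, f a x = x :=
  common_fixed_point_of_commuting_nonexpansive_general f hnonexp hcomm C hCne hCcomp hCconv hmaps
end

section
/- Let X be a compact metric space and let (S^t)_{t≥0} and (T^t)_{t≥0} be two commuting strongly continuous semigroups of nonexpansive maps (for the sup norm) on C(X, ℝ), both commuting with addition of constants, and suppose there is a nonempty, convex, closed, equi-Lipschitz subset K ⊆ C(X,ℝ) that is invariant under both semigroups and under addition of constants. Then there exist u ∈ K and constants β, β' ∈ ℝ such that S^t u = u − tβ and T^t u = u − tβ' for all t ≥ 0. -/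
/-!
Modulo constants, the maps `S t` and `T t` become a commuting family of nonexpansive maps of the
normed space `C(X, ℝ) ⧸ ℝ`, preserving the image of `K`, which is convex and, by Arzelà–Ascoli,
compact. DeMarr's theorem gives a common fixed point there. Lifting back, `S t u - u` and
`T t u - u` are constants depending additively and continuously on `t ≥ 0`, hence linearly.
-/

open Set Metric Function

section CompactInvariant

variable {α : Type*} [TopologicalSpace α]

theorem IsCompact.exists_minimal_nonempty_compact_subset [T2Space α] {P : Set α → Prop}
    (hP : ∀ c : Set (Set α), c.Nonempty → (∀ A ∈ c, P A) → P (⋂₀ c))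
    {A : Set α} (hA : IsCompact A) (hAne : A.Nonempty) (hPA : P A) :
    ∃ M ⊆ A, Minimal (fun B => B.Nonempty ∧ IsCompact B ∧ P B) M := by
  refine zorn_superset_nonempty _ ?_ A ⟨hAne, hA, hPA⟩
  rintro c hc hchain ⟨B, hB⟩
  have : Nonempty c := ⟨⟨B, hB⟩⟩
  have hclosed : ∀ A ∈ c, IsClosed A := fun A hA => (hc hA).2.1.isClosed
  refine ⟨⋂₀ c, ⟨?_, ?_, hP c ⟨B, hB⟩ fun A hA => (hc hA).2.2⟩,
    fun A hA => sInter_subset_of_mem hA⟩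
  · exact IsCompact.nonempty_sInter_of_directed_nonempty_isCompact_isClosed
      (IsChain.directedOn (r := fun A B : Set α => A ⊇ B) hchain.symm) (fun A hA => (hc hA).1)
      (fun A hA => (hc hA).2.1) hclosed
  · exact (hc hB).2.1.of_isClosed_subset (isClosed_sInter hclosed) (sInter_subset_of_mem hB)

theorem image_eq_of_minimal_mapsTo {ι : Type*} {f : ι → α → α} (hf : ∀ i, Continuous (f i))
    (hcomm : ∀ i j, Function.Commute (f i) (f j)) {M : Set α}
    (hM : Minimal (fun B => B.Nonempty ∧ IsCompact B ∧ ∀ i, MapsTo (f i) B B) M) (i : ι) :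
    f i '' M = M := by
  obtain ⟨⟨hMne, hMc, hMf⟩, hMmin⟩ := hM
  refine (hMf i).image_subset.antisymm
    (hMmin ⟨hMne.image _, hMc.image (hf i), fun j => ?_⟩ (hMf i).image_subset)
  rintro _ ⟨x, hx, rfl⟩
  exact ⟨f j x, hMf j hx, hcomm i j x⟩

end CompactInvariant

theorem LipschitzWith.mapsTo_inter_iInter_closedBall {α : Type*} [PseudoMetricSpace α]
    {f : α → α} (hf : LipschitzWith 1 f) {K M : Set α} (hK : MapsTo f K K) (hM : M ⊆ f '' M)
    (r : ℝ) : MapsTo f (K ∩ ⋂ x ∈ M, closedBall x r) (K ∩ ⋂ x ∈ M, closedBall x r) := by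
  refine fun y ⟨hyK, hyM⟩ => ⟨hK hyK, mem_iInter₂.2 fun x hx => ?_⟩
  obtain ⟨x', hx', rfl⟩ := hM hx
  have hyx' : dist y x' ≤ r := mem_closedBall.1 (mem_iInter₂.1 hyM x' hx')
  exact mem_closedBall.2 ((hf.dist_le_mul y x').trans (by simpa using hyx'))

section DeMarr

variable {E : Type*} [NormedAddCommGroup E] [NormedSpace ℝ E]

theorem IsCompact.exists_mem_convexHull_subset_closedBall {M : Set E} (hM : IsCompact M)
    (hd : 0 < diam M) : ∃ u ∈ convexHull ℝ M, ∃ r < diam M, M ⊆ closedBall u r := by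
  classical
  set d := diam M
  obtain ⟨s, hsM, hcover⟩ :=
    hM.elim_nhds_subcover (fun x => ball x (d / 2)) fun x _ => ball_mem_nhds x (by positivity)
  have hnear : ∀ x ∈ M, ∃ y ∈ s, dist x y < d / 2 := fun x hx => by simpa using hcover hx
  obtain ⟨x₀, hx₀⟩ : M.Nonempty := nonempty_iff_ne_empty.2 fun h => by simp [d, h] at hd
  have hn : (0 : ℝ) < s.card := by
    obtain ⟨y, hy, -⟩ := hnear x₀ hx₀
    exact_mod_cast Finset.card_pos.2 ⟨y, hy⟩
  have hw : 0 < ∑ _ ∈ s, (1 : ℝ) := by simpa using hn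
  refine ⟨s.centerMass (fun _ => 1) id,
    s.centerMass_mem_convexHull (fun _ _ => zero_le_one) hw hsM,
    d - d / (2 * s.card), by linarith [show 0 < d / (2 * s.card) by positivity], fun x hx => ?_⟩
  -- the point of `s` close to `x` pulls the average strictly inside
  obtain ⟨y₀, hy₀, hxy₀⟩ := hnear x hx
  have hsum : ∑ y ∈ s, dist y x ≤ ∑ y ∈ s, (d - if y = y₀ then d / 2 else 0) := by
    refine Finset.sum_le_sum fun y hy => ?_
    split_ifs with h
    · rw [h, dist_comm]; linarith
    · simpa using dist_le_diam_of_mem hM.isBounded (hsM y hy) hx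
  rw [Finset.sum_sub_distrib, Finset.sum_ite_eq' s y₀, if_pos hy₀, Finset.sum_const,
    nsmul_eq_mul] at hsum
  rw [mem_closedBall, dist_comm]
  calc dist (s.centerMass (fun _ => 1) id) x
      ≤ s.centerMass (fun _ => 1) (fun y => dist y x) :=
        (convexOn_univ_dist x).map_centerMass_le (fun _ _ => zero_le_one) hw
          fun _ _ => mem_univ _
    _ = (s.card : ℝ)⁻¹ * ∑ y ∈ s, dist y x := by simp [Finset.centerMass]
    _ ≤ (s.card : ℝ)⁻¹ * (s.card * d - d / 2) := by gcongr
    _ = d - d / (2 * s.card) := by field_simp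

theorem exists_isFixedPt_of_commute {ι : Type*} {f : ι → E → E} (hf : ∀ i, LipschitzWith 1 (f i))
    (hcomm : ∀ i j, Function.Commute (f i) (f j)) {Q : Set E} (hQ : IsCompact Q)
    (hQne : Q.Nonempty) (hQconv : Convex ℝ Q) (hQf : ∀ i, MapsTo (f i) Q Q) :
    ∃ z ∈ Q, ∀ i, IsFixedPt (f i) z := by
  obtain ⟨K, hKQ, hK⟩ := hQ.exists_minimal_nonempty_compact_subset
    (P := fun B => Convex ℝ B ∧ ∀ i, MapsTo (f i) B B)
    (fun c _ hc => ⟨convex_sInter fun A hA => (hc A hA).1,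
      fun i => mapsTo_sInter.2 fun A hA => ((hc A hA).2 i).mono_left (sInter_subset_of_mem hA)⟩)
    hQne ⟨hQconv, hQf⟩
  obtain ⟨hKne, hKc, hKconv, hKf⟩ := hK.1
  obtain ⟨M, hMK, hM⟩ := hKc.exists_minimal_nonempty_compact_subset
    (P := fun B => ∀ i, MapsTo (f i) B B)
    (fun c _ hc i => mapsTo_sInter.2 fun A hA => (hc A hA i).mono_left (sInter_subset_of_mem hA))
    hKne hKf
  obtain ⟨hMne, hMc, -⟩ := hM.1
  have himage := image_eq_of_minimal_mapsTo (fun i => (hf i).continuous) hcomm hM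
  -- a nontrivial `M` would let `K` shrink to its points within `r < diam M` of all of `M`,
  -- a set that is invariant because every `f i` maps `M` onto `M`
  have hMsub : M.Subsingleton := by
    by_contra hnt
    have hd := diam_pos (not_subsingleton_iff.1 hnt) hMc.isBounded
    obtain ⟨u, hu, r, hr, hMr⟩ := hMc.exists_mem_convexHull_subset_closedBall hd
    have hKL : K ⊆ K ∩ ⋂ x ∈ M, closedBall x r := by
      refine hK.2 ⟨⟨u, convexHull_min hMK hKconv hu, mem_iInter₂.2 fun x hx => ?_⟩,
        hKc.inter_right (isClosed_biInter fun x _ => isClosed_closedBall),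
        hKconv.inter (convex_iInter₂ fun x _ => convex_closedBall x r),
        fun i => (hf i).mapsTo_inter_iInter_closedBall (hKf i) (himage i).superset r⟩
        inter_subset_left
      exact mem_closedBall_comm.1 (hMr hx)
    have hr0 : 0 ≤ r := dist_nonneg.trans (hMr hMne.some_mem)
    refine hr.not_ge (diam_le_of_forall_dist_le hr0 fun x hx y hy => ?_)
    exact mem_closedBall.1 (mem_iInter₂.1 (hKL (hMK hx)).2 y hy)
  obtain ⟨z, hz⟩ := hMne
  refine ⟨z, hKQ (hMK hz), fun i => hMsub ?_ hz⟩
  exact (himage i).subset (mem_image_of_mem _ hz)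

end DeMarr

namespace Submodule

section

variable {R M : Type*} [Ring R] [AddCommGroup M] [Module R M] (N : Submodule R M)

def equivariantMapQ (g : M → M) (hg : ∀ u, ∀ n ∈ N, g (u + n) = g u + n) : M ⧸ N → M ⧸ N :=
  Quotient.map' g fun u v huv => by
    rw [quotientRel_def] at huv ⊢
    have := hg v (u - v) huv
    rw [add_sub_cancel] at this
    rwa [this, add_sub_cancel_left]

@[simp]
theorem equivariantMapQ_mk (g : M → M) (hg : ∀ u, ∀ n ∈ N, g (u + n) = g u + n) (u : M) :
    N.equivariantMapQ g hg (Quotient.mk u) = Quotient.mk (g u) :=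
  rfl

theorem _root_.Function.Commute.equivariantMapQ {g h : M → M}
    (hg : ∀ u, ∀ n ∈ N, g (u + n) = g u + n) (hh : ∀ u, ∀ n ∈ N, h (u + n) = h u + n)
    (hgh : Function.Commute g h) :
    Function.Commute (N.equivariantMapQ g hg) (N.equivariantMapQ h hh) := by
  intro x
  induction x using Quotient.induction_on
  simp only [equivariantMapQ_mk, hgh _]

end

theorem _root_.LipschitzWith.equivariantMapQ {M : Type*} [SeminormedAddCommGroup M]
    {R : Type*} [Ring R] [Module R M] (N : Submodule R M) {g : M → M}
    (hg : ∀ u, ∀ n ∈ N, g (u + n) = g u + n) (hg1 : LipschitzWith 1 g) :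
    LipschitzWith 1 (N.equivariantMapQ g hg) := by
  refine LipschitzWith.mk_one fun x y => ?_
  induction x using Quotient.induction_on with | _ u => ?_
  induction y using Quotient.induction_on with | _ v => ?_
  refine le_of_forall_pos_lt_add fun ε hε => ?_
  -- move `v` within its class so that `u - v` becomes an almost norm-minimizing representative
  obtain ⟨m, hm, hmε⟩ := Quotient.norm_mk_lt (Quotient.mk (u - v) : M ⧸ N) hε
  have hn : u - v - m ∈ N := (Quotient.eq N).1 hm.symm
  calc dist (N.equivariantMapQ g hg (Quotient.mk u)) (N.equivariantMapQ g hg (Quotient.mk v))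
      = ‖(Quotient.mk (g u - g v) : M ⧸ N)‖ := by
        rw [dist_eq_norm, equivariantMapQ_mk, equivariantMapQ_mk, ← Quotient.mk_sub]
    _ = ‖(Quotient.mk (g u - g (v + (u - v - m))) : M ⧸ N)‖ := by
        rw [hg v _ hn, (Quotient.eq N).2]
        convert hn using 1
        abel
    _ ≤ ‖g u - g (v + (u - v - m))‖ := Quotient.norm_mk_le _ _
    _ ≤ ‖u - (v + (u - v - m))‖ := by simpa [dist_eq_norm] using hg1.dist_le_mul u _
    _ = ‖m‖ := by congr 1; abel
    _ < dist (Quotient.mk u : M ⧸ N) (Quotient.mk v) + ε := by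
        rwa [dist_eq_norm, ← Quotient.mk_sub]

end Submodule

theorem eq_mul_of_map_add_of_continuousOn_Ici {a : ℝ → ℝ}
    (hadd : ∀ s ≥ (0 : ℝ), ∀ t ≥ (0 : ℝ), a (s + t) = a s + a t)
    (hcont : ContinuousOn a (Ici 0)) {t : ℝ} (ht : 0 ≤ t) : a t = t * a 1 := by
  have ha0 : a 0 = 0 := by simpa using hadd 0 le_rfl 0 le_rfl
  have hadd3 : ∀ p q r : ℝ, 0 ≤ p → 0 ≤ q → 0 ≤ r → a (p + q + r) = a p + a q + a r :=
    fun p q r hp hq hr => by rw [hadd _ (add_nonneg hp hq) r hr, hadd p hp q hq]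
  -- extend `a` to an additive map on `ℝ` through `x = max x 0 - max (-x) 0`
  let A : ℝ →+ ℝ :=
    { toFun := fun x => a (max x 0) - a (max (-x) 0)
      map_zero' := by simp
      map_add' := fun x y => by
        have hsplit : max x 0 + max y 0 + max (-(x + y)) 0 =
            max (-x) 0 + max (-y) 0 + max (x + y) 0 := by
          linarith [max_zero_sub_eq_self x, max_zero_sub_eq_self y, max_zero_sub_eq_self (x + y)]
        have := congrArg a hsplit
        rw [hadd3 _ _ _ (le_max_right _ _) (le_max_right _ _) (le_max_right _ _),
          hadd3 _ _ _ (le_max_right _ _) (le_max_right _ _) (le_max_right _ _)] at this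
        linarith }
  have hpos : ∀ x : ℝ, max x 0 ∈ Ici 0 := fun x => mem_Ici.2 (le_max_right x 0)
  have hA : Continuous A :=
    (hcont.comp_continuous (continuous_id.max continuous_const) fun x => hpos x).sub
      (hcont.comp_continuous (continuous_neg.max continuous_const) fun x => hpos (-x))
  have := map_real_smul A hA t 1
  simpa [A, ht, ha0] using this

namespace ContinuousMap

theorem mem_span_one_iff {X : Type*} [TopologicalSpace X] {w : C(X, ℝ)} :
    w ∈ Submodule.span ℝ {(1 : C(X, ℝ))} ↔ ∃ c : ℝ, const X c = w := by
  simp only [Submodule.mem_span_singleton]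
  exact exists_congr fun c => by rw [show c • (1 : C(X, ℝ)) = const X c by ext; simp]

section

variable {X : Type*} [MetricSpace X] [CompactSpace X]

theorem isCompact_setOf_lipschitzWith_apply_eq_zero (L : NNReal) (x₀ : X) :
    IsCompact {u : C(X, ℝ) | LipschitzWith L u ∧ u x₀ = 0} := by
  refine ArzelaAscoli.isCompact_of_equicontinuous _ ?_
    (LipschitzWith.uniformEquicontinuous _ L fun u => u.2.1).equicontinuous
  have himage : ContinuousMap.toFun '' {u : C(X, ℝ) | LipschitzWith L u ∧ u x₀ = 0} =
      {f : X → ℝ | LipschitzWith L f ∧ f x₀ = 0} := by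
    ext f
    exact ⟨by rintro ⟨u, hu, rfl⟩; exact hu, fun hf => ⟨⟨f, hf.1.continuous⟩, hf, rfl⟩⟩
  rw [himage]
  refine (isCompact_univ_pi fun _ => isCompact_closedBall (0 : ℝ) (L * diam (univ : Set X)))
    |>.of_isClosed_subset ((isClosed_setOfPred_lipschitzWith L).inter
      (isClosed_eq (continuous_apply x₀) continuous_const)) ?_
  rintro f ⟨hf, hf0⟩ x -
  rw [mem_closedBall, ← hf0]
  calc dist (f x) (f x₀) ≤ L * dist x x₀ := hf.dist_le_mul x x₀
    _ ≤ L * diam (univ : Set X) := by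
        gcongr; exact dist_le_diam_of_mem isCompact_univ.isBounded trivial trivial

theorem isCompact_image_mkQ_span_one [Nonempty X] {K : Set C(X, ℝ)} (hKclosed : IsClosed K)
    {L : NNReal} (hKlip : ∀ u ∈ K, LipschitzWith L u)
    (hKconst : ∀ u ∈ K, ∀ c : ℝ, u + const X c ∈ K) :
    IsCompact ((Submodule.span ℝ {(1 : C(X, ℝ))}).mkQ '' K) := by
  obtain ⟨x₀⟩ := ‹Nonempty X›
  set N := Submodule.span ℝ {(1 : C(X, ℝ))}
  have hnormalize : N.mkQ '' K = N.mkQ '' (K ∩ {u | LipschitzWith L u ∧ u x₀ = 0}) := by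
    refine (image_mono inter_subset_left).antisymm' ?_
    rintro _ ⟨u, hu, rfl⟩
    refine ⟨u + const X (-u x₀), ⟨hKconst u hu _, hKlip _ (hKconst u hu _), by simp⟩, ?_⟩
    rw [Submodule.mkQ_apply, Submodule.mkQ_apply, Submodule.Quotient.eq, add_sub_cancel_left]
    exact mem_span_one_iff.2 ⟨_, rfl⟩
  rw [hnormalize]
  exact ((isCompact_setOf_lipschitzWith_apply_eq_zero L x₀).inter_left hKclosed).image
    N.isOpenQuotientMap_mkQ.continuous

theorem exists_forall_eq_add_const_of_commute [Nonempty X] {ι : Type*}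
    {f : ι → C(X, ℝ) → C(X, ℝ)} (hf : ∀ i, LipschitzWith 1 (f i))
    (hcomm : ∀ i j, Function.Commute (f i) (f j))
    (hconst : ∀ i u (c : ℝ), f i (u + const X c) = f i u + const X c)
    {K : Set C(X, ℝ)} (hKne : K.Nonempty) (hKconv : Convex ℝ K) (hKclosed : IsClosed K)
    {L : NNReal} (hKlip : ∀ u ∈ K, LipschitzWith L u)
    (hKconst : ∀ u ∈ K, ∀ c : ℝ, u + const X c ∈ K) (hfK : ∀ i, MapsTo (f i) K K) :
    ∃ u ∈ K, ∀ i, ∃ c : ℝ, f i u = u + const X c := by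
  set N := Submodule.span ℝ {(1 : C(X, ℝ))}
  have : IsClosed (N : Set C(X, ℝ)) := N.closed_of_finiteDimensional
  have hequiv : ∀ i u, ∀ n ∈ N, f i (u + n) = f i u + n := by
    rintro i u n hn
    obtain ⟨c, rfl⟩ := mem_span_one_iff.1 hn
    exact hconst i u c
  obtain ⟨_, ⟨u, huK, rfl⟩, hfix⟩ := exists_isFixedPt_of_commute
    (f := fun i => N.equivariantMapQ (f i) (hequiv i))
    (fun i => (hf i).equivariantMapQ N (hequiv i))
    (fun i j => (hcomm i j).equivariantMapQ N (hequiv i) (hequiv j))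
    (isCompact_image_mkQ_span_one hKclosed hKlip hKconst) (hKne.image _) (hKconv.linear_image _)
    (fun i => by rintro _ ⟨v, hv, rfl⟩; exact ⟨f i v, hfK i hv, rfl⟩)
  refine ⟨u, huK, fun i => ?_⟩
  obtain ⟨c, hc⟩ := mem_span_one_iff.1 ((Submodule.Quotient.eq N).1 (hfix i))
  exact ⟨c, by rw [hc, add_sub_cancel]⟩

end

theorem exists_eq_sub_const_mul_of_semigroup {X : Type*} [TopologicalSpace X] [Nonempty X]
    (S : ℝ → C(X, ℝ) → C(X, ℝ))
    (hSsemi : ∀ s ≥ (0 : ℝ), ∀ t ≥ (0 : ℝ), ∀ u, S (s + t) u = S s (S t u))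
    (hSconst : ∀ t ≥ (0 : ℝ), ∀ u (c : ℝ), S t (u + const X c) = S t u + const X c)
    {u : C(X, ℝ)} (hcont : ContinuousOn (fun t => S t u) (Ici 0))
    (hu : ∀ t ≥ (0 : ℝ), ∃ c : ℝ, S t u = u + const X c) :
    ∃ β : ℝ, ∀ t ≥ (0 : ℝ), S t u = u - const X (t * β) := by
  obtain ⟨x₀⟩ := ‹Nonempty X›
  set a : ℝ → ℝ := fun t => S t u x₀ - u x₀
  have hSa : ∀ t ≥ (0 : ℝ), S t u = u + const X (a t) := by
    intro t ht
    obtain ⟨c, hc⟩ := hu t ht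
    simp only [a, hc]
    ext; simp
  have hadd : ∀ s ≥ (0 : ℝ), ∀ t ≥ (0 : ℝ), a (s + t) = a s + a t := by
    intro s hs t ht
    obtain ⟨c, hc⟩ := hu t ht
    simp only [a, hSsemi s hs t ht, hc, hSconst s hs, add_apply, const_apply]
    ring
  have ha : ContinuousOn a (Ici 0) :=
    ((continuous_eval_const x₀).comp_continuousOn hcont).sub continuousOn_const
  refine ⟨-a 1, fun t ht => ?_⟩
  rw [hSa t ht, eq_mul_of_map_add_of_continuousOn_Ici hadd ha ht]
  ext; simp

end ContinuousMap

theorem double_weak_KAM_general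
    {X : Type*} [MetricSpace X] [CompactSpace X]
    (S T : ℝ → C(X, ℝ) → C(X, ℝ))
    (hSsemi : ∀ s ≥ (0:ℝ), ∀ t ≥ (0:ℝ), ∀ u, S (s + t) u = S s (S t u))
    (hTsemi : ∀ s ≥ (0:ℝ), ∀ t ≥ (0:ℝ), ∀ u, T (s + t) u = T s (T t u))
    (hScont : ∀ u, ContinuousOn (fun t => S t u) (Set.Ici 0))
    (hTcont : ∀ u, ContinuousOn (fun t => T t u) (Set.Ici 0))
    (hSnonexp : ∀ t ≥ (0:ℝ), ∀ u v, ‖S t u - S t v‖ ≤ ‖u - v‖)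
    (hTnonexp : ∀ t ≥ (0:ℝ), ∀ u v, ‖T t u - T t v‖ ≤ ‖u - v‖)
    (hcomm : ∀ s ≥ (0:ℝ), ∀ t ≥ (0:ℝ), ∀ u, S s (T t u) = T t (S s u))
    (hSconst : ∀ t ≥ (0:ℝ), ∀ u (c : ℝ),
      S t (u + ContinuousMap.const X c) = S t u + ContinuousMap.const X c)
    (hTconst : ∀ t ≥ (0:ℝ), ∀ u (c : ℝ),
      T t (u + ContinuousMap.const X c) = T t u + ContinuousMap.const X c)
    (K : Set C(X, ℝ)) (hKne : K.Nonempty) (hKconv : Convex ℝ K) (hKclosed : IsClosed K)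
    (hKlip : ∃ L : NNReal, ∀ u ∈ K, LipschitzWith L (u : X → ℝ))
    (hKS : ∀ t ≥ (0:ℝ), Set.MapsTo (S t) K K)
    (hKT : ∀ t ≥ (0:ℝ), Set.MapsTo (T t) K K)
    (hKconst : ∀ u ∈ K, ∀ c : ℝ, u + ContinuousMap.const X c ∈ K) :
    ∃ u ∈ K, ∃ β β' : ℝ, ∀ t ≥ (0:ℝ),
      S t u = u - ContinuousMap.const X (t * β) ∧
      T t u = u - ContinuousMap.const X (t * β') := by
  rcases isEmpty_or_nonempty X with hX | hX
  · obtain ⟨u, hu⟩ := hKne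
    exact ⟨u, hu, 0, 0, fun _ _ => ⟨Subsingleton.elim _ _, Subsingleton.elim _ _⟩⟩
  obtain ⟨L, hL⟩ := hKlip
  let f : Ici (0 : ℝ) ⊕ Ici (0 : ℝ) → C(X, ℝ) → C(X, ℝ) :=
    Sum.elim (fun t => S t) (fun t => T t)
  have hf_comm : ∀ i j, Function.Commute (f i) (f j) := by
    rintro (⟨s, hs⟩ | ⟨s, hs⟩) (⟨t, ht⟩ | ⟨t, ht⟩) u
    · simp only [f, Sum.elim_inl, ← hSsemi s hs t ht, ← hSsemi t ht s hs, add_comm]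
    · exact hcomm s hs t ht u
    · exact (hcomm t ht s hs u).symm
    · simp only [f, Sum.elim_inr, ← hTsemi s hs t ht, ← hTsemi t ht s hs, add_comm]
  have hf_lip : ∀ i, LipschitzWith 1 (f i) := by
    rintro (⟨t, ht⟩ | ⟨t, ht⟩) <;> refine LipschitzWith.mk_one fun u v => ?_ <;>
      simp only [f, Sum.elim_inl, Sum.elim_inr, dist_eq_norm]
    exacts [hSnonexp t ht u v, hTnonexp t ht u v]
  obtain ⟨u, huK, hu⟩ := ContinuousMap.exists_forall_eq_add_const_of_commute hf_lip hf_comm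
    (by rintro (⟨t, ht⟩ | ⟨t, ht⟩); exacts [hSconst t ht, hTconst t ht])
    hKne hKconv hKclosed hL hKconst (by rintro (⟨t, ht⟩ | ⟨t, ht⟩); exacts [hKS t ht, hKT t ht])
  obtain ⟨β, hβ⟩ := ContinuousMap.exists_eq_sub_const_mul_of_semigroup S hSsemi hSconst
    (hScont u) fun t ht => hu (.inl ⟨t, ht⟩)
  obtain ⟨β', hβ'⟩ := ContinuousMap.exists_eq_sub_const_mul_of_semigroup T hTsemi hTconst
    (hTcont u) fun t ht => hu (.inr ⟨t, ht⟩)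
  exact ⟨u, huK, β, β', fun t ht => ⟨hβ t ht, hβ' t ht⟩⟩

/-- Double weak KAM theorem (abstract form): two commuting strongly continuous
semigroups of nonexpansive maps on `C(X,ℝ)` (X compact metric), commuting with
addition of constants and preserving a nonempty convex closed equi-Lipschitz set `K`
which is stable under addition of constants, have a common element `u ∈ K` with
`S^t u = u − tβ` and `T^t u = u − tβ'`. -/
theorem double_weak_KAM
    {X : Type*} [MetricSpace X] [CompactSpace X]
    (S T : ℝ → C(X, ℝ) → C(X, ℝ))
    (hS0 : S 0 = id) (hT0 : T 0 = id)
    (hSsemi : ∀ s ≥ (0:ℝ), ∀ t ≥ (0:ℝ), ∀ u, S (s + t) u = S s (S t u))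
    (hTsemi : ∀ s ≥ (0:ℝ), ∀ t ≥ (0:ℝ), ∀ u, T (s + t) u = T s (T t u))
    (hScont : ∀ u, ContinuousOn (fun t => S t u) (Set.Ici 0))
    (hTcont : ∀ u, ContinuousOn (fun t => T t u) (Set.Ici 0))
    (hSnonexp : ∀ t ≥ (0:ℝ), ∀ u v, ‖S t u - S t v‖ ≤ ‖u - v‖)
    (hTnonexp : ∀ t ≥ (0:ℝ), ∀ u v, ‖T t u - T t v‖ ≤ ‖u - v‖)
    (hcomm : ∀ s ≥ (0:ℝ), ∀ t ≥ (0:ℝ), ∀ u, S s (T t u) = T t (S s u))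
    (hSconst : ∀ t ≥ (0:ℝ), ∀ u (c : ℝ),
      S t (u + ContinuousMap.const X c) = S t u + ContinuousMap.const X c)
    (hTconst : ∀ t ≥ (0:ℝ), ∀ u (c : ℝ),
      T t (u + ContinuousMap.const X c) = T t u + ContinuousMap.const X c)
    (K : Set C(X, ℝ)) (hKne : K.Nonempty) (hKconv : Convex ℝ K) (hKclosed : IsClosed K)
    (hKlip : ∃ L : NNReal, ∀ u ∈ K, LipschitzWith L (u : X → ℝ))
    (hKS : ∀ t ≥ (0:ℝ), Set.MapsTo (S t) K K)
    (hKT : ∀ t ≥ (0:ℝ), Set.MapsTo (T t) K K)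
    (hKconst : ∀ u ∈ K, ∀ c : ℝ, u + ContinuousMap.const X c ∈ K) :
    ∃ u ∈ K, ∃ β β' : ℝ, ∀ t ≥ (0:ℝ),
      S t u = u - ContinuousMap.const X (t * β) ∧
      T t u = u - ContinuousMap.const X (t * β') :=
  double_weak_KAM_general S T hSsemi hTsemi hScont hTcont hSnonexp hTnonexp hcomm hSconst hTconst K
    hKne hKconv hKclosed hKlip hKS hKT hKconst
end
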